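/- arXiv:1609.05256 — 5 statements merged into one kernel-verified Lean document; each statement's English description precedes it below -/
import Mathlib

section
/- Let ε_B, ε_1, n, A > 0 and P ∈ (0,1). Define η(N) = A·P^(N/n)·N/(ε_B·N + ε_1) for N > 0. At any point N₀ > 0 where η'(N₀) = 0, the second derivative satisfies η''(N₀) < 0. -/
open Real

/-!
Writing `P ^ (N / n) = exp (c N)` with `c = log P / n < 0`, the derivative of `η` factors as
`η' = φ · w` with `φ N = A exp (c N) / (ε_B N + ε_1)² > 0` and the quadratic
`w N = c N (ε_B N + ε_1) + ε_1`. At a stationary point `w` vanishes, so the product rule leaves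
`η'' = φ · w' = φ · c (2 ε_B N + ε_1)`, which is negative for `N > 0`.
-/

open Filter Topology

theorem HasDerivAt.mul_of_apply_eq_zero {𝕜 : Type*} [NontriviallyNormedField 𝕜]
    {φ w : 𝕜 → 𝕜} {x w' : 𝕜} (hw : HasDerivAt w w' x) (hw0 : w x = 0)
    (hφ : DifferentiableAt 𝕜 φ x) : HasDerivAt (fun y => φ y * w y) (φ x * w') x := by
  simpa [hw0] using hφ.hasDerivAt.fun_mul hw

section ExpMulDivLinear

variable {A c b d : ℝ}

theorem hasDerivAt_exp_mul_div_linear {x : ℝ} (hx : b * x + d ≠ 0) :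
    HasDerivAt (fun y => A * exp (c * y) * y / (b * y + d))
      (A * exp (c * x) / (b * x + d) ^ 2 * (c * x * (b * x + d) + d)) x := by
  have hexp : HasDerivAt (fun y => exp (c * y)) (exp (c * x) * c) x := by
    simpa using ((hasDerivAt_id x).const_mul c).exp
  have hnum := (hexp.const_mul A).fun_mul (hasDerivAt_id' x)
  have hden : HasDerivAt (fun y => b * y + d) b x := by
    simpa using ((hasDerivAt_id x).const_mul b).add_const d
  refine (hnum.fun_div hden hx).congr_deriv ?_
  rw [div_mul_eq_mul_div]
  ring

theorem deriv_deriv_exp_mul_div_linear_neg (hA : 0 < A) (hc : c < 0) (hb : 0 ≤ b) (hd : 0 < d)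
    {x₀ : ℝ} (hx₀ : 0 ≤ x₀)
    (hstat : deriv (fun y => A * exp (c * y) * y / (b * y + d)) x₀ = 0) :
    deriv (deriv fun y => A * exp (c * y) * y / (b * y + d)) x₀ < 0 := by
  set φ : ℝ → ℝ := fun y => A * exp (c * y) / (b * y + d) ^ 2
  set w : ℝ → ℝ := fun y => c * y * (b * y + d) + d
  have hden : 0 < b * x₀ + d := by positivity
  have hderiv : deriv (fun y => A * exp (c * y) * y / (b * y + d)) =ᶠ[𝓝 x₀]
      fun y => φ y * w y := by
    filter_upwards [(continuous_const.mul continuous_id).add continuous_const |>.continuousAt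
      |>.eventually_ne hden.ne'] with y hy
    exact (hasDerivAt_exp_mul_div_linear hy).deriv
  have hw0 : w x₀ = 0 := by
    have hφ : φ x₀ ≠ 0 := by positivity
    rw [hderiv.eq_of_nhds] at hstat
    exact (mul_eq_zero.mp hstat).resolve_left hφ
  have hφ : DifferentiableAt ℝ φ x₀ := by
    fun_prop (disch := positivity)
  have hw : HasDerivAt w (c * (2 * b * x₀ + d)) x₀ := by
    refine ((((hasDerivAt_id' x₀).const_mul c).fun_mul
      (((hasDerivAt_id' x₀).const_mul b).add_const d)).add_const d).congr_deriv ?_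
    ring
  rw [hderiv.deriv_eq, (hw.mul_of_apply_eq_zero hw0 hφ).deriv]
  exact mul_neg_of_pos_of_neg (by positivity) (mul_neg_of_neg_of_pos hc (by positivity))

end ExpMulDivLinear

theorem stmt_1 (εB ε1 n A : ℝ) (hεB : 0 < εB) (hε1 : 0 < ε1) (hn : 0 < n) (hA : 0 < A)
    (P : ℝ) (hP : P ∈ Set.Ioo (0:ℝ) 1)
    (η : ℝ → ℝ) (hη : ∀ N, η N = A * P ^ (N / n) * N / (εB * N + ε1))
    (N₀ : ℝ) (hN₀ : 0 < N₀) (hstat : deriv η N₀ = 0) :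
    deriv (deriv η) N₀ < 0 := by
  obtain ⟨hP0, hP1⟩ := hP
  have hc : log P / n < 0 := div_neg_of_neg_of_pos (log_neg hP0 hP1) hn
  obtain rfl : η = fun N => A * exp (log P / n * N) * N / (εB * N + ε1) := by
    funext N
    rw [hη, rpow_def_of_pos hP0, mul_div_left_comm, mul_comm N]
  exact deriv_deriv_exp_mul_div_linear_neg hA hc hεB.le hε1 hN₀.le hstat
end

section
/- Let ε_B, ε_1, n, A > 0 and P ∈ (0,1). The function η(N) = A·P^(N/n)·N/(ε_B·N + ε_1) is strictly quasiconcave on (0, ∞); that is, for all x, y > 0 with x ≠ y and every λ ∈ (0,1), η(λx + (1−λ)y) > min(η(x), η(y)). -/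
open Real Set

/-!
For `N > 0` we have `η N = A * exp (g N)` with `g N = (log P / n) * N + log (N / (εB * N + ε1))`.
The map `N ↦ N / (εB * N + ε1)` is positive and strictly concave, so its logarithm is strictly
concave, and adding a linear term keeps `g` strictly concave. A strictly concave function exceeds
the minimum of its endpoint values on an open segment, and `u ↦ A * exp u` is strictly increasing.
-/

lemma strictConcaveOn_div_mul_add {a b : ℝ} (ha : 0 < a) (hb : 0 < b) :
    StrictConcaveOn ℝ (Ioi 0) fun x => x / (a * x + b) := by
  refine ⟨convex_Ioi 0, fun x hx y hy hxy s t hs ht hst => ?_⟩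
  rw [mem_Ioi] at hx hy
  obtain rfl : t = 1 - s := by linarith
  have hxy' : 0 < (x - y) ^ 2 := by positivity [sub_ne_zero.2 hxy]
  have gap : (s * x + (1 - s) * y) / (a * (s * x + (1 - s) * y) + b)
      - (s * (x / (a * x + b)) + (1 - s) * (y / (a * y + b)))
      = s * (1 - s) * a * b * (x - y) ^ 2
        / ((a * x + b) * (a * y + b) * (a * (s * x + (1 - s) * y) + b)) := by
    field_simp
    ring
  have : 0 < s * (1 - s) * a * b * (x - y) ^ 2
      / ((a * x + b) * (a * y + b) * (a * (s * x + (1 - s) * y) + b)) := by positivity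
  simp only [smul_eq_mul]
  linarith

lemma StrictConcaveOn.log {E : Type*} [AddCommMonoid E] [Module ℝ E] {s : Set E} {f : E → ℝ}
    (hf : StrictConcaveOn ℝ s f) (hpos : ∀ x ∈ s, 0 < f x) :
    StrictConcaveOn ℝ s fun x => Real.log (f x) := by
  refine ⟨hf.1, fun x hx y hy hxy a b ha hb hab => ?_⟩
  calc a • Real.log (f x) + b • Real.log (f y) ≤ Real.log (a • f x + b • f y) :=
        strictConcaveOn_log_Ioi.concaveOn.2 (hpos x hx) (hpos y hy) ha.le hb.le hab
    _ < Real.log (f (a • x + b • y)) :=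
        Real.log_lt_log (by positivity [hpos x hx, hpos y hy]) (hf.2 hx hy hxy ha hb hab)

lemma strictConcaveOn_mul_add_log_div (c : ℝ) {a b : ℝ} (ha : 0 < a) (hb : 0 < b) :
    StrictConcaveOn ℝ (Ioi 0) fun x => c * x + Real.log (x / (a * x + b)) :=
  ((LinearMap.mulLeft ℝ c).concaveOn (convex_Ioi 0)).add_strictConcaveOn
    ((strictConcaveOn_div_mul_add ha hb).log fun x (hx : 0 < x) => by positivity)

lemma rpow_div_mul_div_eq_exp {P N : ℝ} (n a b : ℝ) (hP : 0 < P) (hN : 0 < N) (ha : 0 ≤ a)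
    (hb : 0 < b) :
    P ^ (N / n) * N / (a * N + b) = exp (Real.log P / n * N + Real.log (N / (a * N + b))) := by
  rw [exp_add, exp_log (by positivity), rpow_def_of_pos hP]
  ring_nf

theorem stmt_2_general (εB ε1 n A : ℝ) (hεB : 0 < εB) (hε1 : 0 < ε1) (hA : 0 < A)
    (P : ℝ) (hP : P ∈ Set.Ioo (0:ℝ) 1)
    (η : ℝ → ℝ) (hη : ∀ N, η N = A * P ^ (N / n) * N / (εB * N + ε1)) :
    ∀ x ∈ Set.Ioi (0:ℝ), ∀ y ∈ Set.Ioi (0:ℝ), x ≠ y →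
      ∀ t ∈ Set.Ioo (0:ℝ) 1, min (η x) (η y) < η (t * x + (1 - t) * y) := by
  intro x hx y hy hxy t ⟨ht0, ht1⟩
  set g : ℝ → ℝ := fun N => Real.log P / n * N + Real.log (N / (εB * N + ε1))
  have hη_exp : ∀ N ∈ Ioi (0 : ℝ), η N = A * exp (g N) := fun N (hN : 0 < N) => by
    rw [hη, mul_assoc, mul_div_assoc, rpow_div_mul_div_eq_exp n εB ε1 hP.1 hN hεB.le hε1]
  have hφ : StrictMono fun u => A * exp u := fun u v huv =>
    mul_lt_mul_of_pos_left (exp_lt_exp.2 huv) hA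
  have hg := (strictConcaveOn_mul_add_log_div (Real.log P / n) hεB hε1).lt_on_open_segment'
    hx hy hxy ht0 (sub_pos.2 ht1) (add_sub_cancel _ _)
  have hz : t * x + (1 - t) * y ∈ Ioi (0 : ℝ) :=
    convex_Ioi 0 hx hy ht0.le (sub_pos.2 ht1).le (add_sub_cancel _ _)
  rw [hη_exp x hx, hη_exp y hy, hη_exp _ hz, ← hφ.monotone.map_min]
  exact hφ hg

theorem stmt_2 (εB ε1 n A : ℝ) (hεB : 0 < εB) (hε1 : 0 < ε1) (hn : 0 < n) (hA : 0 < A)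
    (P : ℝ) (hP : P ∈ Set.Ioo (0:ℝ) 1)
    (η : ℝ → ℝ) (hη : ∀ N, η N = A * P ^ (N / n) * N / (εB * N + ε1)) :
    ∀ x ∈ Set.Ioi (0:ℝ), ∀ y ∈ Set.Ioi (0:ℝ), x ≠ y →
      ∀ t ∈ Set.Ioo (0:ℝ) 1, min (η x) (η y) < η (t * x + (1 - t) * y) :=
  stmt_2_general εB ε1 n A hεB hε1 hA P hP η hη
end

section
/- Let ε_B, ε_1, n, A > 0 and P ∈ (0,1), and set N* = sqrt( ε_1²/(4ε_B²) − n·ε_1/(ε_B·log P) ) − ε_1/(2ε_B). Then N* > 0 and N* is the unique global maximizer of η(N) = A·P^(N/n)·N/(ε_B·N + ε_1) over N ∈ (0, ∞): for all N > 0 with N ≠ N*, η(N) < η(N*). -/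
/-!
Taking logarithms, `log η(N) = log A + (N / n) log P + log N - log (ε_B N + ε_1)`, whose derivative is
`ε_1 (1 / (ε_B N² + ε_1 N) - 1 / C)` with `C = -n ε_1 / log P > 0`. As `ε_B N² + ε_1 N` increases on
`(0, ∞)`, the derivative is positive before and negative after the positive root `N*` of
`ε_B N² + ε_1 N = C`, so `log η`, hence `η`, is strictly unimodal with peak at `N*`.
-/

open Real Set

theorem lt_of_hasDerivAt_pos_of_neg {f f' : ℝ → ℝ} {a c : ℝ} (hac : a < c)
    (hf : ∀ x, a < x → HasDerivAt f (f' x) x)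
    (hpos : ∀ x, a < x → x < c → 0 < f' x) (hneg : ∀ x, c < x → f' x < 0)
    {x : ℝ} (hx : a < x) (hxc : x ≠ c) : f x < f c := by
  have hcont : ContinuousOn f (Ioi a) := fun y hy => (hf y hy).continuousAt.continuousWithinAt
  rcases hxc.lt_or_gt with hlt | hgt
  · have hmono : StrictMonoOn f (Ioc a c) := by
      refine strictMonoOn_of_deriv_pos (convex_Ioc a c) (hcont.mono Ioc_subset_Ioi_self) ?_
      intro y hy
      rw [interior_Ioc] at hy
      rw [(hf y hy.1).deriv]
      exact hpos y hy.1 hy.2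
    exact hmono ⟨hx, hlt.le⟩ ⟨hac, le_rfl⟩ hlt
  · have hanti : StrictAntiOn f (Ici c) := by
      refine strictAntiOn_of_deriv_neg (convex_Ici c) (hcont.mono fun y hy => hac.trans_le hy) ?_
      intro y hy
      rw [interior_Ici] at hy
      rw [(hf y (hac.trans hy)).deriv]
      exact hneg y hy
    exact hanti self_mem_Ici hgt.le hgt

section Quadratic

variable {a b c : ℝ}

/-- The larger root of `a x ^ 2 + b x = c`. -/
noncomputable def quadPosRoot (a b c : ℝ) : ℝ := √(b ^ 2 / (4 * a ^ 2) + c / a) - b / (2 * a)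

theorem quadPosRoot_spec (ha : a ≠ 0) (hd : 0 ≤ b ^ 2 / (4 * a ^ 2) + c / a) :
    a * quadPosRoot a b c ^ 2 + b * quadPosRoot a b c = c := by
  have hs := sq_sqrt hd
  rw [quadPosRoot]
  generalize √(b ^ 2 / (4 * a ^ 2) + c / a) = s at hs ⊢
  field_simp at hs ⊢
  linear_combination hs

theorem quadPosRoot_pos (ha : 0 < a) (hb : 0 < b) (hc : 0 < c) : 0 < quadPosRoot a b c := by
  have hb' : 0 ≤ b / (2 * a) := by positivity
  rw [quadPosRoot, sub_pos, lt_sqrt hb', show (b / (2 * a)) ^ 2 = b ^ 2 / (4 * a ^ 2) by ring]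
  linarith [div_pos hc ha]

theorem strictMonoOn_mul_sq_add_mul (ha : 0 < a) (hb : 0 ≤ b) :
    StrictMonoOn (fun x => a * x ^ 2 + b * x) (Ici 0) := by
  intro x hx y hy hxy
  simp only [mem_Ici] at hx hy
  nlinarith [mul_pos ha (sub_pos.2 hxy)]

theorem lt_quadPosRoot_iff (ha : 0 < a) (hb : 0 < b) (hc : 0 < c) {x : ℝ} (hx : 0 ≤ x) :
    x < quadPosRoot a b c ↔ a * x ^ 2 + b * x < c := by
  conv_rhs => rw [← quadPosRoot_spec (b := b) (c := c) ha.ne' (by positivity)]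
  exact ((strictMonoOn_mul_sq_add_mul ha hb.le).lt_iff_lt hx (quadPosRoot_pos ha hb hc).le).symm

theorem quadPosRoot_lt_iff (ha : 0 < a) (hb : 0 < b) (hc : 0 < c) {x : ℝ} (hx : 0 ≤ x) :
    quadPosRoot a b c < x ↔ c < a * x ^ 2 + b * x := by
  conv_rhs => rw [← quadPosRoot_spec (b := b) (c := c) ha.ne' (by positivity)]
  exact ((strictMonoOn_mul_sq_add_mul ha hb.le).lt_iff_lt (quadPosRoot_pos ha hb hc).le hx).symm

end Quadratic

section Efficiency

variable {A P n εB ε1 x : ℝ}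

noncomputable def logEfficiency (A P n εB ε1 x : ℝ) : ℝ :=
  log A + x / n * log P + log x - log (εB * x + ε1)

theorem exp_logEfficiency (hA : 0 < A) (hP : 0 < P) (hεB : 0 ≤ εB) (hε1 : 0 < ε1) (hx : 0 < x) :
    exp (logEfficiency A P n εB ε1 x) = A * P ^ (x / n) * x / (εB * x + ε1) := by
  rw [logEfficiency, exp_sub, exp_add, exp_add, exp_log hA, exp_log hx,
    exp_log (by positivity), rpow_def_of_pos hP, mul_comm (log P)]

theorem hasDerivAt_logEfficiency (hεB : 0 ≤ εB) (hε1 : 0 < ε1) (hx : 0 < x) :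
    HasDerivAt (logEfficiency A P n εB ε1)
      (log P / n + ε1 / (εB * x ^ 2 + ε1 * x)) x := by
  have hden : 0 < εB * x + ε1 := by positivity
  have hlin := ((hasDerivAt_id x).div_const n).mul_const (log P)
  have hden' : HasDerivAt (fun y => εB * y + ε1) εB x := by
    simpa using ((hasDerivAt_id x).const_mul εB).add_const ε1
  refine (((hlin.const_add (log A)).add (hasDerivAt_log hx.ne')).sub
    (hden'.log hden.ne')).congr_deriv ?_
  field_simp
  ring

end Efficiency

theorem stmt_4 (εB ε1 n A : ℝ) (hεB : 0 < εB) (hε1 : 0 < ε1) (hn : 0 < n) (hA : 0 < A)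
    (P : ℝ) (hP : P ∈ Set.Ioo (0:ℝ) 1)
    (Nstar : ℝ)
    (hNstar : Nstar = Real.sqrt (ε1 ^ 2 / (4 * εB ^ 2) - n * ε1 / (εB * Real.log P))
        - ε1 / (2 * εB))
    (η : ℝ → ℝ) (hη : ∀ N, η N = A * P ^ (N / n) * N / (εB * N + ε1)) :
    0 < Nstar ∧ ∀ N, 0 < N → N ≠ Nstar → η N < η Nstar := by
  obtain ⟨hP0, hP1⟩ := hP
  have hL : log P < 0 := log_neg hP0 hP1
  set C := -(n * ε1 / log P)
  have hC : 0 < C := neg_pos.2 (div_neg_of_pos_of_neg (by positivity) hL)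
  have hroot : Nstar = quadPosRoot εB ε1 C := by
    rw [hNstar, quadPosRoot]
    congr 2
    simp only [C]
    ring
  subst hroot
  have hslope : ∀ x, log P / n + ε1 / (εB * x ^ 2 + ε1 * x)
      = ε1 * (1 / (εB * x ^ 2 + ε1 * x) - 1 / C) := by
    intro x
    simp only [C]
    field_simp
    ring
  have hη' : ∀ x, 0 < x → η x = exp (logEfficiency A P n εB ε1 x) := fun x hx => by
    rw [hη, exp_logEfficiency hA hP0 hεB.le hε1 hx]
  have hNpos := quadPosRoot_pos hεB hε1 hC
  refine ⟨hNpos, fun N hN hne => ?_⟩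
  rw [hη' N hN, hη' _ hNpos, exp_lt_exp]
  refine lt_of_hasDerivAt_pos_of_neg hNpos (fun x hx => hasDerivAt_logEfficiency hεB.le hε1 hx)
    (fun x hx hxr => ?_) (fun x hxr => ?_) hN hne <;> rw [hslope]
  · have hD := (lt_quadPosRoot_iff hεB hε1 hC hx.le).1 hxr
    exact mul_pos hε1 (sub_pos.2 (one_div_lt_one_div_of_lt (by positivity) hD))
  · have hD := (quadPosRoot_lt_iff hεB hε1 hC (hNpos.trans hxr).le).1 hxr
    exact mul_neg_of_pos_of_neg hε1 (sub_neg.2 (one_div_lt_one_div_of_lt hC hD))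
end

section
/- Let T_s, T_1, n, A > 0 and P ∈ (0,1), and set N* = sqrt( T_1²/(4T_s²) − n·T_1/(T_s·log P) ) − T_1/(2T_s). Then N* is the unique global maximizer over N ∈ (0, ∞) of the throughput R(N) = A·P^(N/n)·N/(T_1 + T_s·N). -/
/-!
Taking logarithms, `log R(N) = log A + (N/n) log P + log N - log (T_1 + T_s N)`, whose derivative is
`log P / n + T_1 / (N (T_1 + T_s N))`. Since `N (T_1 + T_s N)` increases strictly on `(0, ∞)`,
this derivative changes sign exactly once, from positive to negative, at the positive root of
`T_s N² + T_1 N + n T_1 / log P = 0`, which is `N*`.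
-/

open Real Set

/-- The positive root of `a x² + b x - c` when `a, c > 0`. -/
noncomputable def positiveRoot (a b c : ℝ) : ℝ :=
  √(b ^ 2 / (4 * a ^ 2) + c / a) - b / (2 * a)

theorem positiveRoot_pos {a c : ℝ} (b : ℝ) (ha : 0 < a) (hc : 0 < c) :
    0 < positiveRoot a b c := by
  have hsq : (b / (2 * a)) ^ 2 < b ^ 2 / (4 * a ^ 2) + c / a := by
    rw [div_pow, mul_pow]
    norm_num
    positivity
  exact sub_pos.mpr (lt_sqrt_of_sq_lt hsq)

theorem positiveRoot_mul_add {a b c : ℝ} (ha : a ≠ 0) (h : 0 ≤ b ^ 2 / (4 * a ^ 2) + c / a) :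
    positiveRoot a b c * (b + a * positiveRoot a b c) = c := by
  have hs := sq_sqrt h
  unfold positiveRoot
  set s := √(b ^ 2 / (4 * a ^ 2) + c / a)
  field_simp at hs ⊢
  linear_combination hs

theorem apply_lt_apply_of_hasDerivAt_sign_change {f f' : ℝ → ℝ} {a x₀ : ℝ} (hx₀ : a < x₀)
    (hf : ∀ x ∈ Ioi a, HasDerivAt f (f' x) x) (hpos : ∀ x ∈ Ioo a x₀, 0 < f' x)
    (hneg : ∀ x ∈ Ioi x₀, f' x < 0) {x : ℝ} (hx : a < x) (hne : x ≠ x₀) : f x < f x₀ := by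
  have hcont : ContinuousOn f (Ioi a) := fun y hy => (hf y hy).continuousAt.continuousWithinAt
  rcases hne.lt_or_gt with hlt | hgt
  · have hmono : StrictMonoOn f (Ioc a x₀) := by
      refine strictMonoOn_of_deriv_pos (convex_Ioc a x₀) (hcont.mono Ioc_subset_Ioi_self) ?_
      intro y hy
      rw [interior_Ioc] at hy
      rw [(hf y hy.1).deriv]
      exact hpos y hy
    exact hmono ⟨hx, hlt.le⟩ ⟨hx₀, le_rfl⟩ hlt
  · have hanti : StrictAntiOn f (Ici x₀) := by
      refine strictAntiOn_of_deriv_neg (convex_Ici x₀)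
        (hcont.mono fun y hy => hx₀.trans_le hy) ?_
      intro y hy
      rw [interior_Ici] at hy
      rw [(hf y (hx₀.trans hy)).deriv]
      exact hneg y hy
    exact hanti (mem_Ici.mpr le_rfl) hgt.le hgt

section Throughput

variable {Ts T1 n : ℝ}

noncomputable def logThroughput (Ts T1 n L N : ℝ) : ℝ :=
  N / n * L + log N - log (T1 + Ts * N)

theorem throughput_eq_mul_exp_logThroughput (A : ℝ) {P N : ℝ} (hP : 0 < P) (hN : 0 < N)
    (hD : 0 < T1 + Ts * N) :
    A * P ^ (N / n) * N / (T1 + Ts * N) = A * exp (logThroughput Ts T1 n (log P) N) := by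
  rw [logThroughput, exp_sub, exp_add, exp_log hN, exp_log hD, rpow_def_of_pos hP,
    mul_comm (log P)]
  ring

theorem hasDerivAt_logThroughput (L : ℝ) {N : ℝ} (hN : N ≠ 0) (hD : T1 + Ts * N ≠ 0) :
    HasDerivAt (logThroughput Ts T1 n L) (L / n + T1 / (N * (T1 + Ts * N))) N := by
  have hlin : HasDerivAt (fun N => T1 + Ts * N) Ts N := by
    simpa using ((hasDerivAt_id N).const_mul Ts).const_add T1
  refine ((((hasDerivAt_id' N).div_const n).mul_const L).add (hasDerivAt_log hN)).sub
    (hlin.log hD) |>.congr_deriv ?_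
  have hsplit : T1 / (N * (T1 + Ts * N)) = 1 / N - Ts / (T1 + Ts * N) := by
    rw [div_sub_div 1 Ts hN hD]
    ring
  rw [hsplit]
  ring

theorem strictMonoOn_mul_add_mul_self (hTs : 0 ≤ Ts) (hT1 : 0 < T1) :
    StrictMonoOn (fun x => x * (T1 + Ts * x)) (Ici 0) := by
  intro x hx y _ hxy
  have hfactor : 0 < (y - x) * (T1 + Ts * (x + y)) :=
    mul_pos (sub_pos.mpr hxy)
      (add_pos_of_pos_of_nonneg hT1 (mul_nonneg hTs (by linarith [mem_Ici.mp hx])))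
  linarith [show y * (T1 + Ts * y) - x * (T1 + Ts * x) = (y - x) * (T1 + Ts * (x + y)) by ring]

theorem logThroughput_lt_of_root {L x₀ : ℝ} (hTs : 0 < Ts) (hT1 : 0 < T1) (hn : n ≠ 0)
    (hx₀ : 0 < x₀) (hroot : x₀ * (T1 + Ts * x₀) = -(n * T1 / L)) {N : ℝ} (hN : 0 < N)
    (hne : N ≠ x₀) : logThroughput Ts T1 n L N < logThroughput Ts T1 n L x₀ := by
  have hmono := strictMonoOn_mul_add_mul_self hTs.le hT1
  have hderiv : ∀ x, L / n + T1 / (x * (T1 + Ts * x)) =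
      T1 / (x * (T1 + Ts * x)) - T1 / (x₀ * (T1 + Ts * x₀)) := by
    intro x
    rw [hroot]
    field_simp
    ring
  refine apply_lt_apply_of_hasDerivAt_sign_change hx₀
    (fun x hx => hasDerivAt_logThroughput L (ne_of_gt hx) (add_pos hT1 (mul_pos hTs hx)).ne')
    (fun x ⟨hx, hxx₀⟩ => ?_) (fun x hx => ?_) hN hne
  · rw [hderiv, sub_pos]
    exact div_lt_div_of_pos_left hT1 (by positivity) (hmono hx.le hx₀.le hxx₀)
  · rw [hderiv, sub_neg]
    exact div_lt_div_of_pos_left hT1 (by positivity) (hmono hx₀.le (hx₀.trans hx).le hx)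

end Throughput

theorem stmt_5 (Ts T1 n A : ℝ) (hTs : 0 < Ts) (hT1 : 0 < T1) (hn : 0 < n) (hA : 0 < A)
    (P : ℝ) (hP : P ∈ Set.Ioo (0:ℝ) 1)
    (Nstar : ℝ)
    (hNstar : Nstar = Real.sqrt (T1 ^ 2 / (4 * Ts ^ 2) - n * T1 / (Ts * Real.log P))
        - T1 / (2 * Ts))
    (R : ℝ → ℝ) (hR : ∀ N, R N = A * P ^ (N / n) * N / (T1 + Ts * N)) :
    0 < Nstar ∧ ∀ N, 0 < N → N ≠ Nstar → R N < R Nstar := by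
  obtain ⟨hP0, hP1⟩ := hP
  have hc : 0 < -(n * T1 / log P) :=
    neg_pos.mpr (div_neg_of_pos_of_neg (by positivity) (log_neg hP0 hP1))
  have hNstar' : Nstar = positiveRoot Ts T1 (-(n * T1 / log P)) := by
    rw [hNstar, positiveRoot]
    ring_nf
  have hpos : 0 < Nstar := hNstar' ▸ positiveRoot_pos T1 hTs hc
  have hroot : Nstar * (T1 + Ts * Nstar) = -(n * T1 / log P) :=
    hNstar' ▸ positiveRoot_mul_add hTs.ne' (add_nonneg (by positivity) (div_pos hc hTs).le)
  refine ⟨hpos, fun N hN hne => ?_⟩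
  rw [hR, hR, throughput_eq_mul_exp_logThroughput A hP0 hN (by positivity),
    throughput_eq_mul_exp_logThroughput A hP0 hpos (by positivity)]
  exact mul_lt_mul_of_pos_left
    (exp_lt_exp.mpr (logThroughput_lt_of_root hTs hT1 hn.ne' hpos hroot hN hne)) hA
end

section
/- Let ε_B, ε_1, n > 0 and P ∈ (0,1). The optimal frame size N*(ε_1) = sqrt( ε_1²/(4ε_B²) − n·ε_1/(ε_B·log P) ) − ε_1/(2ε_B) is strictly increasing as a function of the overhead energy ε_1 > 0. -/
open Real

lemma key_aux (a c ε : ℝ) (ha : 0 < a) (hc : 0 < c) (hε : 0 < ε) :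
    Real.sqrt (a ^ 2 * ε ^ 2 + c * ε) - a * ε =
      c / (Real.sqrt (a ^ 2 + c / ε) + a) := by
  have h1 : a ^ 2 * ε ^ 2 + c * ε = ε ^ 2 * (a ^ 2 + c / ε) := by
    field_simp
  have harg : 0 ≤ a ^ 2 + c / ε := by positivity
  have hs : Real.sqrt (a ^ 2 + c / ε) ^ 2 = a ^ 2 + c / ε := Real.sq_sqrt harg
  set s := Real.sqrt (a ^ 2 + c / ε) with hsdef
  have hspos : 0 ≤ s := Real.sqrt_nonneg _
  have hden : 0 < s + a := by linarith
  rw [h1, Real.sqrt_mul (sq_nonneg ε), Real.sqrt_sq hε.le, eq_div_iff (ne_of_gt hden)]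
  have : (ε * s - a * ε) * (s + a) = ε * (s ^ 2 - a ^ 2) := by ring
  rw [this, hs]
  field_simp
  ring

theorem stmt_7 (εB n : ℝ) (hεB : 0 < εB) (hn : 0 < n)
    (P : ℝ) (hP : P ∈ Set.Ioo (0:ℝ) 1)
    (Nstar : ℝ → ℝ)
    (hNstar : ∀ ε1, Nstar ε1 =
      Real.sqrt (ε1 ^ 2 / (4 * εB ^ 2) - n * ε1 / (εB * Real.log P)) - ε1 / (2 * εB)) :
    StrictMonoOn Nstar (Set.Ioi 0) := by
  have hlog : Real.log P < 0 := Real.log_neg hP.1 hP.2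
  set a : ℝ := 1 / (2 * εB) with hadef
  set c : ℝ := -(n / (εB * Real.log P)) with hcdef
  have ha : 0 < a := by positivity
  have hc : 0 < c := by
    rw [hcdef, neg_pos]
    apply div_neg_of_pos_of_neg hn
    exact mul_neg_of_pos_of_neg hεB hlog
  have hform : ∀ ε : ℝ, 0 < ε → Nstar ε = c / (Real.sqrt (a ^ 2 + c / ε) + a) := by
    intro ε hε
    rw [hNstar ε]
    have h2 : ε ^ 2 / (4 * εB ^ 2) - n * ε / (εB * Real.log P) = a ^ 2 * ε ^ 2 + c * ε := by
      rw [hadef, hcdef]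
      field_simp
      ring
    have h3 : ε / (2 * εB) = a * ε := by rw [hadef]; ring
    rw [h2, h3, key_aux a c ε ha hc hε]
  intro x hx y hy hxy
  have hx' : 0 < x := hx
  have hy' : 0 < y := hy
  rw [hform x hx', hform y hy']
  have hxy' : c / y < c / x := div_lt_div_of_pos_left hc hx' hxy
  have hsq : Real.sqrt (a ^ 2 + c / y) < Real.sqrt (a ^ 2 + c / x) := by
    apply Real.sqrt_lt_sqrt (by positivity)
    linarith
  have := Real.sqrt_nonneg (a ^ 2 + c / y)
  apply div_lt_div_of_pos_left hc
  · linarith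
  · linarith
end
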